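/- Assume L ≥ max(r₁, 1). For every x ∈ ℝ^{Nd} and every lattice point y ∈ ℤ^{Nd} with |y| > |x| + (4N+2)L, the pair of cubes Λ_L(x), Λ_L(y) is separable. -/

import Mathlib

open Set Metric

/-- The open cube (max-norm ball) of radius `L` centered at `u` in `ℝ^{Nd} ≅ (ℝ^d)^N`,
equipped with the max-norm (the sup-norm on the Pi type). -/
def cube {N d : ℕ} (L : ℝ) (u : Fin N → Fin d → ℝ) : Set (Fin N → Fin d → ℝ) :=
  Metric.ball u L

/-- `Λ_L(y)` is `J`-separable from `Λ_L(x)`: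
`(∪_{j∈J} Π_j Λ_{L+r₁}(y)) ∩ [(∪_{i∉J} Π_i Λ_{L+r₁}(y)) ∪ (∪_{i=1}^N Π_i Λ_{L+r₁}(x))] = ∅`. -/
def JSeparable {N d : ℕ} (r₁ L : ℝ) (J : Finset (Fin N))
    (x y : Fin N → Fin d → ℝ) : Prop :=
  (⋃ j ∈ J, (fun z : Fin N → Fin d → ℝ => z j) '' cube (L + r₁) y) ∩
    ((⋃ i ∈ (J : Set (Fin N))ᶜ, (fun z : Fin N → Fin d → ℝ => z i) '' cube (L + r₁) y) ∪
      ⋃ i : Fin N, (fun z : Fin N → Fin d → ℝ => z i) '' cube (L + r₁) x) = ∅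

/-- A pair of cubes `Λ_L(x)`, `Λ_L(y)` is separable if for some nonempty `J ⊆ {1,…,N}`,
either `Λ_L(y)` is `J`-separable from `Λ_L(x)` or `Λ_L(x)` is `J`-separable from `Λ_L(y)`. -/
def SeparablePair {N d : ℕ} (r₁ L : ℝ) (x y : Fin N → Fin d → ℝ) : Prop :=
  ∃ J : Finset (Fin N), J.Nonempty ∧ (JSeparable r₁ L J x y ∨ JSeparable r₁ L J y x)

/-!
Let `Y` be the lattice point, `M = max_n |Y_n|` and `c = 2(L + r₁)`. The `N` disjoint windows
`(M - (k+1)c, M - kc)`, `k < N`, cannot all be hit by the `N - 1` norms `|Y_n|` other than a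
maximal one, so some window is empty. Cutting there, the particles above the window are `c`-far
from those below it and, since `|Y| - |x| ≥ Nc`, from every particle of `x`; so their projected
cubes of radius `L + r₁` are disjoint from all the others.
-/

lemma exists_lt_card_forall_notMem_Ioo {ι : Type*} [Fintype ι] (f : ι → ℝ) (i₀ : ι)
    {c : ℝ} (hc : 0 ≤ c) :
    ∃ k < Fintype.card ι, ∀ i, f i ∉ Ioo (f i₀ - (k + 1) * c) (f i₀ - k * c) := by
  classical
  have : Nonempty ι := ⟨i₀⟩
  by_contra! h
  choose! g hg using
    fun k (hk : k ∈ Finset.range (Fintype.card ι)) => h k (Finset.mem_range.1 hk)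
  have hmaps : MapsTo g (Finset.range (Fintype.card ι)) (Finset.univ.erase i₀) := by
    intro k hk
    refine Finset.mem_erase.2 ⟨fun hgk => ?_, Finset.mem_univ _⟩
    have hlt := (hg k hk).2
    rw [hgk] at hlt
    linarith [mul_nonneg (Nat.cast_nonneg (α := ℝ) k) hc]
  have hanti : StrictAntiOn (f ∘ g) (Finset.range (Fintype.card ι)) := by
    intro a ha b hb hab
    show f (g b) < f (g a)
    have hab' : (a + 1 : ℝ) * c ≤ b * c := by gcongr; exact_mod_cast hab
    linarith [(hg a ha).1, (hg b hb).2]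
  have hcard := Finset.card_le_card_of_injOn g hmaps hanti.injOn.of_comp
  rw [Finset.card_range, Finset.card_erase_of_mem (Finset.mem_univ _), Finset.card_univ] at hcard
  have := Fintype.card_pos (α := ι)
  omega

lemma norm_sub_norm_le_dist {E : Type*} [SeminormedAddCommGroup E] (a b : E) :
    ‖a‖ - ‖b‖ ≤ dist a b :=
  (norm_sub_norm_le a b).trans_eq (dist_eq_norm a b).symm

lemma exists_separated_finset_of_norm_le {ι E : Type*} [Fintype ι] [Nonempty ι]
    [SeminormedAddCommGroup E] (x y : ι → E) {c : ℝ} (hc : 0 ≤ c)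
    (hfar : ‖x‖ + Fintype.card ι * c ≤ ‖y‖) :
    ∃ J : Finset ι, J.Nonempty ∧ (∀ j ∈ J, ∀ i ∉ J, c ≤ dist (y j) (y i)) ∧
      ∀ j ∈ J, ∀ i, c ≤ dist (y j) (x i) := by
  classical
  obtain ⟨i₀, hi₀⟩ := Finite.exists_max fun i => ‖y i‖
  obtain ⟨k, hk, hgap⟩ := exists_lt_card_forall_notMem_Ioo (fun i => ‖y i‖) i₀ hc
  have hy : ‖y‖ ≤ ‖y i₀‖ := (pi_norm_le_iff_of_nonneg (norm_nonneg _)).2 hi₀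
  have hkc : (k + 1 : ℝ) * c ≤ Fintype.card ι * c := by gcongr; exact_mod_cast hk
  refine ⟨Finset.univ.filter fun i => ‖y i₀‖ - k * c ≤ ‖y i‖,
    ⟨i₀, by simp [mul_nonneg (Nat.cast_nonneg (α := ℝ) k) hc]⟩, ?_, ?_⟩
  · intro j hj i hi
    simp only [Finset.mem_filter, Finset.mem_univ, true_and, not_le] at hj hi
    have hyi : ‖y i‖ ≤ ‖y i₀‖ - (k + 1) * c := not_lt.1 fun h => hgap i ⟨h, hi⟩
    linarith [norm_sub_norm_le_dist (y j) (y i)]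
  · intro j hj i
    simp only [Finset.mem_filter, Finset.mem_univ, true_and] at hj
    linarith [norm_sub_norm_le_dist (y j) (x i), norm_le_pi_norm x i]

lemma image_eval_ball_subset {ι : Type*} {π : ι → Type*} [Fintype ι]
    [∀ i, PseudoMetricSpace (π i)] (u : ∀ i, π i) (r : ℝ) (j : ι) :
    (fun z : ∀ i, π i => z j) '' ball u r ⊆ ball (u j) r :=
  image_subset_iff.2 fun z hz => (dist_le_pi_dist z u j).trans_lt hz

lemma disjoint_image_eval_ball {ι E : Type*} [Fintype ι] [PseudoMetricSpace E]
    {u v : ι → E} {r : ℝ} {i j : ι} (h : 2 * r ≤ dist (u j) (v i)) :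
    Disjoint ((fun z : ι → E => z j) '' ball u r) ((fun z : ι → E => z i) '' ball v r) :=
  (ball_disjoint_ball (by linarith)).mono (image_eval_ball_subset u r j)
    (image_eval_ball_subset v r i)

lemma jSeparable_of_le_dist {N d : ℕ} {r₁ L : ℝ} (J : Finset (Fin N))
    (x y : Fin N → Fin d → ℝ)
    (hyy : ∀ j ∈ J, ∀ i ∉ J, 2 * (L + r₁) ≤ dist (y j) (y i))
    (hyx : ∀ j ∈ J, ∀ i, 2 * (L + r₁) ≤ dist (y j) (x i)) :
    JSeparable r₁ L J x y := by
  rw [JSeparable, ← disjoint_iff_inter_eq_empty]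
  simp only [disjoint_iUnion_left, disjoint_union_right, disjoint_iUnion_right]
  exact ⟨fun i hi j hj => disjoint_image_eval_ball (hyy j hj i hi),
    fun i j hj => disjoint_image_eval_ball (hyx j hj i)⟩

theorem separable_of_far_general (N d : ℕ) (hN : 1 ≤ N)
    (r₁ : ℝ) (hr₁ : 0 ≤ r₁) (L : ℝ) (hL : max r₁ 1 ≤ L)
    (x : Fin N → Fin d → ℝ) (y : Fin N → Fin d → ℤ)
    (hfar : ‖(fun n i => (y n i : ℝ) : Fin N → Fin d → ℝ)‖ > ‖x‖ + (4 * N + 2) * L) :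
    SeparablePair r₁ L x (fun n i => (y n i : ℝ)) := by
  have : Nonempty (Fin N) := ⟨⟨0, hN⟩⟩
  have hr₁L : r₁ ≤ L := (le_max_left _ _).trans hL
  have hL1 : 1 ≤ L := (le_max_right _ _).trans hL
  have hfar' : ‖x‖ + Fintype.card (Fin N) * (2 * (L + r₁)) ≤
      ‖(fun n i => (y n i : ℝ) : Fin N → Fin d → ℝ)‖ := by
    rw [Fintype.card_fin]
    nlinarith [(Nat.cast_nonneg N : (0 : ℝ) ≤ N)]
  obtain ⟨J, hJ, hyy, hyx⟩ := exists_separated_finset_of_norm_le x _ (by positivity) hfar'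
  exact ⟨J, hJ, Or.inl (jSeparable_of_le_dist J x _ hyy hyx)⟩

/-- If `L ≥ max(r₁, 1)`, then for every `x ∈ ℝ^{Nd}` and every lattice point
`y ∈ ℤ^{Nd}` with `|y| > |x| + (4N+2)L`, the pair of cubes `Λ_L(x)`, `Λ_L(y)`
is separable. -/
theorem separable_of_far (N d : ℕ) (hN : 1 ≤ N) (hd : 1 ≤ d)
    (r₁ : ℝ) (hr₁ : 0 ≤ r₁) (L : ℝ) (hL : max r₁ 1 ≤ L)
    (x : Fin N → Fin d → ℝ) (y : Fin N → Fin d → ℤ)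
    (hfar : ‖(fun n i => (y n i : ℝ) : Fin N → Fin d → ℝ)‖ > ‖x‖ + (4 * N + 2) * L) :
    SeparablePair r₁ L x (fun n i => (y n i : ℝ)) :=
  separable_of_far_general N d hN r₁ hr₁ L hL x y hfar
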